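/- arXiv:1103.2300 — 2 statements merged into one kernel-verified Lean document; each statement's English description precedes it below -/
import Mathlib

section
/- Let M be a smooth finite-dimensional manifold, x ∈ M, and s : M → M a smooth diffeomorphism with s(x) = x whose differential at x equals −id on T_xM. Then for all smooth vector fields X, Y on M and every smooth function f on M, (1/2)[X, fY + s_*(fY)]_x = (X_x f)·Y_x + f(x)·(1/2)[X, Y + s_*Y]_x; that is, the operator (∇_X Y)_x := (1/2)[X, Y + s_*Y]_x satisfies the Leibniz rule in its second argument. -/
/-! Since `s` fixes `x` with differential `-id` there, so does `s⁻¹`; hence `(s_*Y)_x = -Y_x` and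
`X_x (f ∘ s⁻¹) = -X_x f`. As `s_*(fY) = (f ∘ s⁻¹) • s_*Y`, expanding both brackets with the
Leibniz rule `[X, aY] = (X a) Y + a [X, Y]` makes the two first-order terms at `x` equal to
`(X_x f) Y_x`, while the rest is `f(x) [X, Y + s_*Y]_x`. -/

open scoped Manifold
local notation "∞" => (⊤ : ℕ∞)

/-- The pushforward of a vector field (viewed, as is standard, as a derivation of the
algebra of smooth functions) along a diffeomorphism `s` with smooth inverse `sinv`:
`(s_*Y) f = (Y (f ∘ s)) ∘ s⁻¹`. -/
noncomputable def pushforwardVF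
    {E : Type*} [NormedAddCommGroup E] [NormedSpace ℝ E]
    {H : Type*} [TopologicalSpace H] {I : ModelWithCorners ℝ E H}
    {M : Type*} [TopologicalSpace M] [ChartedSpace H M]
    (s sinv : C^∞⟮I, M; I, M⟯) (hs : ∀ z : M, s (sinv z) = z)
    (Y : Derivation ℝ C^∞⟮I, M; ℝ⟯ C^∞⟮I, M; ℝ⟯) :
    Derivation ℝ C^∞⟮I, M; ℝ⟯ C^∞⟮I, M; ℝ⟯ :=
  Derivation.mk'
    { toFun := fun f => (Y (f.comp s)).comp sinv
      map_add' := fun f g => by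
        show (Y ((f + g).comp s)).comp sinv
            = (Y (f.comp s)).comp sinv + (Y (g.comp s)).comp sinv
        rw [ContMDiffMap.add_comp, map_add, ContMDiffMap.add_comp]
      map_smul' := fun c f => by
        show (Y ((c • f).comp s)).comp sinv = c • (Y (f.comp s)).comp sinv
        rw [ContMDiffMap.smul_comp, Derivation.map_smul, ContMDiffMap.smul_comp] }
    (fun f g => by
      show (Y ((f * g).comp s)).comp sinv
          = f • (Y (g.comp s)).comp sinv + g • (Y (f.comp s)).comp sinv
      rw [ContMDiffMap.mul_comp, Derivation.leibniz]
      ext z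
      simp [hs z])

theorem Derivation.commutator_smul_right {R A : Type*} [CommRing R] [CommRing A] [Algebra R A]
    (X Y : Derivation R A A) (a : A) : ⁅X, a • Y⁆ = X a • Y + a • ⁅X, Y⁆ := by
  ext b
  simp only [Derivation.commutator_apply, Derivation.smul_apply, Derivation.add_apply,
    Derivation.leibniz, smul_eq_mul]
  ring

section Pushforward

variable {E : Type*} [NormedAddCommGroup E] [NormedSpace ℝ E]
  {H : Type*} [TopologicalSpace H] {I : ModelWithCorners ℝ E H}
  {M : Type*} [TopologicalSpace M] [ChartedSpace H M]

theorem Derivation.evalAt_smul (x : M) (a : C^∞⟮I, M; ℝ⟯)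
    (D : Derivation ℝ C^∞⟮I, M; ℝ⟯ C^∞⟮I, M; ℝ⟯) :
    Derivation.evalAt x (a • D) = a x • Derivation.evalAt x D :=
  rfl

theorem hfdifferential_eq_neg_of_leftInverse {s sinv : C^∞⟮I, M; I, M⟯}
    (hinv' : Function.LeftInverse sinv s) {x : M} (hsx : s x = x) (hsinvx : sinv x = x)
    (hds : ∀ v : PointDerivation I x, 𝒅ₕ hsx v = -v) (v : PointDerivation I x) :
    𝒅ₕ hsinvx v = -v := by
  ext h
  have hcomp : (h.comp sinv).comp s = h := by ext z; exact congrArg h (hinv' z)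
  have hneg : v h = -v (h.comp sinv) := by
    have := congrArg (fun w : PointDerivation I x => w (h.comp sinv)) (hds v)
    change v ((h.comp sinv).comp s) = -v (h.comp sinv) at this
    rwa [hcomp] at this
  change v (h.comp sinv) = -v h
  rw [hneg, neg_neg]

variable {s sinv : C^∞⟮I, M; I, M⟯} (hs : ∀ z : M, s (sinv z) = z)

theorem pushforwardVF_smul (f : C^∞⟮I, M; ℝ⟯) (Y : Derivation ℝ C^∞⟮I, M; ℝ⟯ C^∞⟮I, M; ℝ⟯) :
    pushforwardVF s sinv hs (f • Y) = f.comp sinv • pushforwardVF s sinv hs Y :=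
  rfl

theorem evalAt_pushforwardVF {x : M} (hsx : s x = x) (hsinvx : sinv x = x)
    (Y : Derivation ℝ C^∞⟮I, M; ℝ⟯ C^∞⟮I, M; ℝ⟯) :
    Derivation.evalAt x (pushforwardVF s sinv hs Y) = 𝒅ₕ hsx (Derivation.evalAt x Y) := by
  ext g
  change (Y (g.comp s)) (sinv x) = (Y (g.comp s)) x
  rw [hsinvx]

end Pushforward

theorem statement1_general
    {E : Type*} [NormedAddCommGroup E] [NormedSpace ℝ E]
    {H : Type*} [TopologicalSpace H] {I : ModelWithCorners ℝ E H}
    {M : Type*} [TopologicalSpace M] [ChartedSpace H M]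
    (x : M) (s sinv : C^∞⟮I, M; I, M⟯)
    (hinv : ∀ z : M, s (sinv z) = z) (hinv' : ∀ z : M, sinv (s z) = z)
    (hsx : s x = x)
    (hds : ∀ v : PointDerivation I x, 𝒅ₕ hsx v = -v) :
    ∀ (X Y : Derivation ℝ C^∞⟮I, M; ℝ⟯ C^∞⟮I, M; ℝ⟯) (f : C^∞⟮I, M; ℝ⟯),
      (1/2 : ℝ) • Derivation.evalAt x ⁅X, f • Y + pushforwardVF s sinv hinv (f • Y)⁆
        = (Derivation.evalAt x X f) • Derivation.evalAt x Y
          + f x • ((1/2 : ℝ) •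
              Derivation.evalAt x ⁅X, Y + pushforwardVF s sinv hinv Y⁆) := by
  intro X Y f
  have hsinvx : sinv x = x := by simpa only [hsx] using hinv' x
  have hXf : X (f.comp sinv) x = -X f x :=
    congrArg (fun v : PointDerivation I x => v f)
      (hfdifferential_eq_neg_of_leftInverse hinv' hsx hsinvx hds (Derivation.evalAt x X))
  have hY : Derivation.evalAt x (pushforwardVF s sinv hinv Y) = -Derivation.evalAt x Y := by
    rw [evalAt_pushforwardVF hinv hsx hsinvx, hds]
  -- `Derivation.evalAt x X f` is well-typed only up to unfolding, which blocks `rw`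
  change (1/2 : ℝ) • Derivation.evalAt x ⁅X, f • Y + pushforwardVF s sinv hinv (f • Y)⁆
    = X f x • Derivation.evalAt x Y
      + f x • ((1/2 : ℝ) • Derivation.evalAt x ⁅X, Y + pushforwardVF s sinv hinv Y⁆)
  rw [pushforwardVF_smul]
  generalize pushforwardVF s sinv hinv Y = P at hY ⊢
  rw [lie_add X (f • Y) (f.comp sinv • P), lie_add X Y P,
    Derivation.commutator_smul_right X Y f, Derivation.commutator_smul_right X P (f.comp sinv)]
  simp only [map_add, Derivation.evalAt_smul, hY, hXf, ContMDiffMap.comp_apply, hsinvx]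
  module

/-- (Leibniz part of Proposition 1.3.) Let `M` be a smooth
finite-dimensional manifold, `x ∈ M`, and `s` a smooth diffeomorphism of `M` (with
smooth inverse `sinv`) such that `s x = x` and whose differential at `x` is `-id`
on `T_xM`. Then for all smooth vector fields `X, Y` and every smooth function `f`,
`(1/2)[X, fY + s_*(fY)]_x = (X_x f)·Y_x + f(x)·(1/2)[X, Y + s_*Y]_x`. -/
theorem statement1
    {E : Type*} [NormedAddCommGroup E] [NormedSpace ℝ E] [FiniteDimensional ℝ E]
    {H : Type*} [TopologicalSpace H] {I : ModelWithCorners ℝ E H} [I.Boundaryless]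
    {M : Type*} [TopologicalSpace M] [ChartedSpace H M] [IsManifold I (⊤ : ℕ∞) M]
    [T2Space M]
    (x : M) (s sinv : C^∞⟮I, M; I, M⟯)
    (hinv : ∀ z : M, s (sinv z) = z) (hinv' : ∀ z : M, sinv (s z) = z)
    (hsx : s x = x)
    (hds : ∀ v : PointDerivation I x, 𝒅ₕ hsx v = -v) :
    ∀ (X Y : Derivation ℝ C^∞⟮I, M; ℝ⟯ C^∞⟮I, M; ℝ⟯) (f : C^∞⟮I, M; ℝ⟯),
      (1/2 : ℝ) • Derivation.evalAt x ⁅X, f • Y + pushforwardVF s sinv hinv (f • Y)⁆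
        = (Derivation.evalAt x X f) • Derivation.evalAt x Y
          + f x • ((1/2 : ℝ) •
              Derivation.evalAt x ⁅X, Y + pushforwardVF s sinv hinv Y⁆) :=
  statement1_general x s sinv hinv hinv' hsx hds
end

section
/- Let M be a smooth finite-dimensional manifold and let (s_z)_{z∈M} be a family of smooth diffeomorphisms of M such that for all z ∈ M: s_z(z) = z, the differential of s_z at z equals −id on T_zM, s_z∘s_z = id_M, and s_y∘s_x∘s_y = s_{s_y(x)} for all x, y ∈ M. Define, for smooth vector fields X, Y and z ∈ M, (∇_X Y)_z := (1/2)[X, Y + (s_z)_*Y]_z. Then ∇ is invariant under every s_y: for all x, y ∈ M and all smooth vector fields X, Y, (∇_{(s_y)_*X} (s_y)_*Y)_x = d(s_y)_{s_y(x)}((∇_X Y)_{s_y(x)}). -/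
/-!
Pushing vector fields forward along a diffeomorphism is a Lie algebra morphism, additive, and
evaluates at a point through the differential. The symmetry relation
`s_y ∘ s_x ∘ s_y = s_{s_y x}` gives `(s_x)_* (s_y)_* = (s_y)_* (s_{s_y x})_*`, so the left-hand side
is `(s_y)_*` applied to `(1/2)[X, Y + (s_{s_y x})_* Y]`, evaluated at `x`, which is the
differential of `s_y` applied to that bracket at `s_y x`.
-/

open scoped Manifold
local notation "∞" => (⊤ : ℕ∞)

section

variable {E : Type*} [NormedAddCommGroup E] [NormedSpace ℝ E]
  {H : Type*} [TopologicalSpace H] {I : ModelWithCorners ℝ E H}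
  {M : Type*} [TopologicalSpace M] [ChartedSpace H M]

theorem pushforwardVF_apply (σ σinv : C^∞⟮I, M; I, M⟯) (hσ : ∀ z, σ (σinv z) = z)
    (Z : Derivation ℝ C^∞⟮I, M; ℝ⟯ C^∞⟮I, M; ℝ⟯) (f : C^∞⟮I, M; ℝ⟯) :
    pushforwardVF σ σinv hσ Z f = (Z (f.comp σ)).comp σinv :=
  rfl

theorem pushforwardVF_add (σ σinv : C^∞⟮I, M; I, M⟯) (hσ : ∀ z, σ (σinv z) = z)
    (Z W : Derivation ℝ C^∞⟮I, M; ℝ⟯ C^∞⟮I, M; ℝ⟯) :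
    pushforwardVF σ σinv hσ (Z + W) = pushforwardVF σ σinv hσ Z + pushforwardVF σ σinv hσ W := by
  refine Derivation.ext fun f => ?_
  simp only [pushforwardVF_apply, Derivation.add_apply, ContMDiffMap.add_comp]

theorem pushforwardVF_lie (σ σinv : C^∞⟮I, M; I, M⟯) (hσ : ∀ z, σ (σinv z) = z)
    (hσinv : ∀ z, σinv (σ z) = z) (Z W : Derivation ℝ C^∞⟮I, M; ℝ⟯ C^∞⟮I, M; ℝ⟯) :
    ⁅pushforwardVF σ σinv hσ Z, pushforwardVF σ σinv hσ W⁆ = pushforwardVF σ σinv hσ ⁅Z, W⁆ := by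
  have comp_cancel : ∀ g : C^∞⟮I, M; ℝ⟯, (g.comp σinv).comp σ = g := fun g => by
    ext z
    exact congrArg g (hσinv z)
  refine Derivation.ext fun f => ?_
  simp only [Derivation.commutator_apply, pushforwardVF_apply, comp_cancel]
  rfl

theorem pushforwardVF_pushforwardVF_eq_of_comp_eq
    (σ σinv τ τinv σ' σ'inv τ' τ'inv : C^∞⟮I, M; I, M⟯)
    (hσ : ∀ z, σ (σinv z) = z) (hτ : ∀ z, τ (τinv z) = z)
    (hσ' : ∀ z, σ' (σ'inv z) = z) (hτ' : ∀ z, τ' (τ'inv z) = z)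
    (hcomp : ∀ z, σ (τ z) = σ' (τ' z)) (hcomp_inv : ∀ z, τinv (σinv z) = τ'inv (σ'inv z))
    (Z : Derivation ℝ C^∞⟮I, M; ℝ⟯ C^∞⟮I, M; ℝ⟯) :
    pushforwardVF σ σinv hσ (pushforwardVF τ τinv hτ Z)
      = pushforwardVF σ' σ'inv hσ' (pushforwardVF τ' τ'inv hτ' Z) := by
  refine Derivation.ext fun f => ?_
  have hf : (f.comp σ).comp τ = (f.comp σ').comp τ' := by
    ext z
    exact congrArg f (hcomp z)
  ext z
  change Z ((f.comp σ).comp τ) (τinv (σinv z)) = Z ((f.comp σ').comp τ') (τ'inv (σ'inv z))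
  rw [hf, hcomp_inv]

theorem evalAt_pushforwardVF_s4 (σ σinv : C^∞⟮I, M; I, M⟯) (hσ : ∀ z, σ (σinv z) = z)
    (D : Derivation ℝ C^∞⟮I, M; ℝ⟯ C^∞⟮I, M; ℝ⟯) (x : M) :
    Derivation.evalAt x (pushforwardVF σ σinv hσ D)
      = 𝒅ₕ (hσ x) (Derivation.evalAt (σinv x) D) :=
  rfl

theorem pushforwardVF_symmetry_comm (s : M → C^∞⟮I, M; I, M⟯)
    (hinvol : ∀ z w : M, s z (s z w) = w)
    (hsym : ∀ x y w : M, s y (s x (s y w)) = s (s y x) w) (x y : M)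
    (Z : Derivation ℝ C^∞⟮I, M; ℝ⟯ C^∞⟮I, M; ℝ⟯) :
    pushforwardVF (s x) (s x) (hinvol x) (pushforwardVF (s y) (s y) (hinvol y) Z)
      = pushforwardVF (s y) (s y) (hinvol y)
          (pushforwardVF (s (s y x)) (s (s y x)) (hinvol (s y x)) Z) := by
  refine pushforwardVF_pushforwardVF_eq_of_comp_eq _ _ _ _ _ _ _ _ _ _ _ _
    (fun w => ?_) (fun z => ?_) Z
  · rw [← hsym x y w, hinvol]
  · rw [← hsym x y (s y z), hinvol]

end

theorem statement4_general
    {E : Type*} [NormedAddCommGroup E] [NormedSpace ℝ E]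
    {H : Type*} [TopologicalSpace H] {I : ModelWithCorners ℝ E H}
    {M : Type*} [TopologicalSpace M] [ChartedSpace H M]
    (s : M → C^∞⟮I, M; I, M⟯)
    (hinvol : ∀ z w : M, s z (s z w) = w)
    (hsym : ∀ x y w : M, s y (s x (s y w)) = s (s y x) w) :
    ∀ (x y : M) (X Y : Derivation ℝ C^∞⟮I, M; ℝ⟯ C^∞⟮I, M; ℝ⟯),
      (1/2 : ℝ) • Derivation.evalAt x
          ⁅pushforwardVF (s y) (s y) (hinvol y) X,
            pushforwardVF (s y) (s y) (hinvol y) Y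
              + pushforwardVF (s x) (s x) (hinvol x)
                  (pushforwardVF (s y) (s y) (hinvol y) Y)⁆
        = 𝒅ₕ (hinvol y x)
            ((1/2 : ℝ) • Derivation.evalAt (s y x)
              ⁅X, Y + pushforwardVF (s (s y x)) (s (s y x)) (hinvol (s y x)) Y⁆) := by
  intro x y X Y
  rw [pushforwardVF_symmetry_comm s hinvol hsym, ← pushforwardVF_add,
    pushforwardVF_lie _ _ _ (hinvol y), evalAt_pushforwardVF_s4, map_smul]

/-- (Remark 1.9.) Let `(s_z)_{z∈M}` be a family of smooth
diffeomorphisms of the smooth finite-dimensional manifold `M` with `s_z z = z`,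
`d(s_z)_z = -id`, `s_z ∘ s_z = id` and `s_y ∘ s_x ∘ s_y = s_{s_y x}`. Define
`(∇_X Y)_z := (1/2)[X, Y + (s_z)_*Y]_z`. Then `∇` is invariant under every `s_y`:
for all `x, y` and all smooth vector fields `X, Y`,
`(∇_{(s_y)_*X} (s_y)_*Y)_x = d(s_y)_{s_y x}((∇_X Y)_{s_y x})`. -/
theorem statement4
    {E : Type*} [NormedAddCommGroup E] [NormedSpace ℝ E] [FiniteDimensional ℝ E]
    {H : Type*} [TopologicalSpace H] {I : ModelWithCorners ℝ E H} [I.Boundaryless]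
    {M : Type*} [TopologicalSpace M] [ChartedSpace H M] [IsManifold I (⊤ : ℕ∞) M]
    [T2Space M]
    (s : M → C^∞⟮I, M; I, M⟯)
    (hfix : ∀ z : M, s z z = z)
    (hinvol : ∀ z w : M, s z (s z w) = w)
    (hsym : ∀ x y w : M, s y (s x (s y w)) = s (s y x) w)
    (hds : ∀ (z : M) (v : PointDerivation I z), 𝒅ₕ (hfix z) v = -v) :
    ∀ (x y : M) (X Y : Derivation ℝ C^∞⟮I, M; ℝ⟯ C^∞⟮I, M; ℝ⟯),
      (1/2 : ℝ) • Derivation.evalAt x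
          ⁅pushforwardVF (s y) (s y) (hinvol y) X,
            pushforwardVF (s y) (s y) (hinvol y) Y
              + pushforwardVF (s x) (s x) (hinvol x)
                  (pushforwardVF (s y) (s y) (hinvol y) Y)⁆
        = 𝒅ₕ (hinvol y x)
            ((1/2 : ℝ) • Derivation.evalAt (s y x)
              ⁅X, Y + pushforwardVF (s (s y x)) (s (s y x)) (hinvol (s y x)) Y⁆) :=
  statement4_general s hinvol hsym
end
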